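/- Let G be a group with an abelian normal subgroup T ≅ (ℤ/9)², an element σ ∈ G, and a homomorphism χ: G → ℤ/3. Suppose a, b is a ℤ/9-basis of T with χ(a) = 0, χ(b) = 1, and σ a σ⁻¹ = a + 3μ₁a + 3μ₂b with μ₂ ≢ 0 mod 3. Then there is no group homomorphism ρ: G → H (where H ≤ U₄(ℤ/3) is the subgroup of matrices N(c,u,v,w)) with ψ ∘ ρ = χ, where ψ: H → ℤ/3 reads off the constant superdiagonal entry. -/
import Mathlib


/-- The matrix `N(c,u,v,w)` over `ℤ/3`, with rows
`(1,c,u,v)`, `(0,1,c,w)`, `(0,0,1,c)`, `(0,0,0,1)`; these matrices form the subgroup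
`H` of `U₄(ℤ/3)`, and `ψ : H → ℤ/3` reads off the constant superdiagonal entry `c`. -/
def N4 (c u v w : ZMod 3) : Matrix (Fin 4) (Fin 4) (ZMod 3) :=
  !![1, c, u, v; 0, 1, c, w; 0, 0, 1, c; 0, 0, 0, 1]

lemma N4_mul (c u v w c' u' v' w' : ZMod 3) :
    N4 c u v w * N4 c' u' v' w' =
      N4 (c + c') (u + u' + c * c') (v + v' + c * w' + u * c') (w + w' + c * c') := by
  ext i j
  fin_cases i <;> fin_cases j <;>
    simp [N4, Matrix.mul_apply, Fin.sum_univ_four, Matrix.vecHead, Matrix.vecTail] <;> ring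

lemma N4_zero_eq_one : N4 0 0 0 0 = 1 := by
  ext i j
  fin_cases i <;> fin_cases j <;>
    simp [N4, Matrix.one_apply, Matrix.vecHead, Matrix.vecTail, Function.comp]

lemma N4_entry03 (c u v w c' u' v' w' : ZMod 3) (h : N4 c u v w = N4 c' u' v' w') :
    v = v' := by
  have := congrFun (congrFun h 0) 3
  simpa [N4, Matrix.vecHead, Matrix.vecTail] using this

lemma N4_cube_c0 (u v w : ZMod 3) : N4 0 u v w ^ 3 = 1 := by
  have h2 : N4 0 u v w ^ 2 = N4 0 (u+u) (v+v) (w+w) := by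
    rw [sq, N4_mul]; ring_nf
  have h3 : N4 0 u v w ^ 3 = N4 0 (u+u+u) (v+v+v) (w+w+w) := by
    rw [pow_succ, h2, N4_mul]; ring_nf
  have t : ∀ x : ZMod 3, x + x + x = 0 := by decide
  rw [h3, t, t, t, N4_zero_eq_one]

lemma N4_cube_c1 : ∀ u v w : ZMod 3, N4 1 u v w ^ 3 = N4 0 0 1 0 := by decide

lemma N4_pow_v (x : ℕ) : N4 0 0 1 0 ^ x = N4 0 0 (x : ZMod 3) 0 := by
  induction x with
  | zero => simpa using N4_zero_eq_one.symm
  | succ n ih => rw [pow_succ, ih, N4_mul]; push_cast; ring_nf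

/-- let `G` be a group containing a normal abelian subgroup
`T = ⟨a,b⟩ ≅ (ℤ/9)²` with basis `a, b`, an element `σ`, and a homomorphism
`χ : G → ℤ/3` with `χ(a) = 0`, `χ(b) = 1`, such that `σaσ⁻¹ = a^(1+3μ₁) b^(3μ₂)`
with `μ₂ ≢ 0 (mod 3)`.  Then there is no homomorphism `ρ : G → H ≤ U₄(ℤ/3)` with
`ψ ∘ ρ = χ`. -/
theorem no_H_lift (G : Type*) [Group G] (a b σ : G)
    (hab : a * b = b * a) (ha : orderOf a = 9) (hb : orderOf b = 9)
    (hT : Nat.card (Subgroup.closure ({a, b} : Set G)) = 81)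
    (hTn : (Subgroup.closure ({a, b} : Set G)).Normal)
    (μ₁ μ₂ : ℕ) (hμ₂ : ¬ (3 ∣ μ₂))
    (hconj : σ * a * σ⁻¹ = a ^ (1 + 3 * μ₁) * b ^ (3 * μ₂))
    (χ : G →* Multiplicative (ZMod 3))
    (hχa : χ a = 1) (hχb : Multiplicative.toAdd (χ b) = 1) :
    ¬ ∃ ρ : G →* Matrix (Fin 4) (Fin 4) (ZMod 3), ∀ g : G, ∃ u v w : ZMod 3,
        ρ g = N4 (Multiplicative.toAdd (χ g)) u v w := by
  rintro ⟨ρ, hρ⟩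
  obtain ⟨u, v, w, hA⟩ := hρ a
  obtain ⟨u', v', w', hB⟩ := hρ b
  obtain ⟨u'', v'', w'', hS⟩ := hρ σ
  rw [hχa] at hA
  rw [hχb] at hB
  simp only [toAdd_one] at hA
  -- from commutativity of a and b : u = w
  have hc : ρ a * ρ b = ρ b * ρ a := by
    rw [← map_mul, ← map_mul, hab]
  rw [hA, hB, N4_mul, N4_mul] at hc
  have huw : u = w := by
    have h := N4_entry03 _ _ _ _ _ _ _ _ hc
    ring_nf at h
    linear_combination h
  -- the conjugation relation
  have hGa : σ * a = (a ^ (1 + 3 * μ₁) * b ^ (3 * μ₂)) * σ :=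
    mul_inv_eq_iff_eq_mul.mp hconj
  have hM : ρ σ * ρ a = ρ a ^ (1 + 3 * μ₁) * ρ b ^ (3 * μ₂) * ρ σ := by
    have := congrArg ρ hGa
    simpa only [map_mul, map_pow] using this
  rw [hA, hB, hS] at hM
  have hpa : N4 0 u v w ^ (1 + 3 * μ₁) = N4 0 u v w := by
    rw [pow_add, pow_mul, N4_cube_c0, one_pow, mul_one, pow_one]
  have hpb : N4 1 u' v' w' ^ (3 * μ₂) = N4 0 0 (μ₂ : ZMod 3) 0 := by
    rw [pow_mul, N4_cube_c1, N4_pow_v]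
  rw [hpa, hpb, N4_mul, N4_mul, N4_mul] at hM
  have h := N4_entry03 _ _ _ _ _ _ _ _ hM
  have hz : (μ₂ : ZMod 3) = 0 := by
    rw [huw] at h
    ring_nf at h
    linear_combination -h
  exact hμ₂ ((ZMod.natCast_eq_zero_iff μ₂ 3).mp hz)
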